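/- Let h : {a}* → {a,b}* be the function that changes every other letter a to b, defined by h(a^{2n}) = (ab)ⁿ and h(a^{2n+1}) = (ab)ⁿ·a. Then h is J-continuous: for every language L ⊆ {a,b}* recognized by a finite J-trivial monoid, the preimage h⁻¹(L) is recognized by a finite J-trivial monoid. -/
import Mathlib

/-- The two-letter alphabet `{a, b}`. -/
inductive AB : Type
  | a : AB
  | b : AB
deriving DecidableEq

/-- `wpow x k` is the `k`-fold concatenation `xᵏ` of the word `x`. -/
def wpow {A : Type*} (x : List A) : ℕ → List A
  | 0 => []
  | n + 1 => x ++ wpow x n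

/-- The function changing every other `a` to `b`:
`h(a^{2n}) = (ab)ⁿ` and `h(a^{2n+1}) = (ab)ⁿ·a`. -/
def hAlt (w : List Unit) : List AB :=
  wpow [AB.a, AB.b] (w.length / 2) ++ (if w.length % 2 = 1 then [AB.a] else [])

/-- A finite monoid is J-trivial if mutually J-related elements are equal. -/
def IsJTrivial (M : Type) [Monoid M] : Prop :=
  ∀ p q : M, (∃ m₁ m₂ : M, p = m₁ * q * m₂) → (∃ m₁ m₂ : M, q = m₁ * p * m₂) →
    p = q

/-- `L` is recognized by a finite J-trivial monoid. -/
def RecogByFinJTrivialMonoid {A : Type} (L : Set (List A)) : Prop :=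
  ∃ (M : Type) (_ : Fintype M) (_ : Monoid M), IsJTrivial M ∧
    ∃ (φ : FreeMonoid A →* M) (S : Set M),
      L = {w : List A | φ (FreeMonoid.ofList w) ∈ S}

/-- Truncated counter type: natural numbers capped at `K`. -/
def Cap (K : ℕ) : Type := {n : ℕ // n ≤ K}

/-- Monoid structure on `Cap K`: addition truncated at `K`. -/
instance capMonoid (K : ℕ) : Monoid (Cap K) where
  mul x y := ⟨min (x.val + y.val) K, min_le_right _ _⟩
  one := ⟨0, Nat.zero_le K⟩
  mul_assoc a b c := Subtype.ext (by
    show min (min (a.val + b.val) K + c.val) K = min (a.val + min (b.val + c.val) K) K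
    omega)
  one_mul a := Subtype.ext (by
    have := a.2
    show min (0 + a.val) K = a.val
    omega)
  mul_one a := Subtype.ext (by
    have := a.2
    show min (a.val + 0) K = a.val
    omega)

noncomputable instance capFintype (K : ℕ) : Fintype (Cap K) :=
  Fintype.ofInjective (fun c => (⟨c.val, Nat.lt_succ_of_le c.2⟩ : Fin (K + 1)))
    (fun _ _ h => Subtype.ext (congrArg Fin.val h))

/-- The homomorphism sending a word over `Unit` to its truncated length. -/
def capHom (K : ℕ) : FreeMonoid Unit →* Cap K where
  toFun w := ⟨min (FreeMonoid.toList w).length K, min_le_right _ _⟩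
  map_one' := Subtype.ext (by
    show min (FreeMonoid.toList 1).length K = 0
    rw [FreeMonoid.toList_one]
    simp)
  map_mul' x y := Subtype.ext (by
    show min (FreeMonoid.toList (x * y)).length K
        = min (min (FreeMonoid.toList x).length K + min (FreeMonoid.toList y).length K) K
    rw [FreeMonoid.toList_mul, List.length_append]
    omega)

theorem capJTrivial (K : ℕ) : IsJTrivial (Cap K) := by
  intro p q ⟨m₁, m₂, h1⟩ ⟨n₁, n₂, h2⟩
  apply Subtype.ext
  have hp := p.2; have hq := q.2
  have e1 : p.val = min (min (m₁.val + q.val) K + m₂.val) K := congrArg Subtype.val h1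
  have e2 : q.val = min (min (n₁.val + p.val) K + n₂.val) K := congrArg Subtype.val h2
  omega

/-- The word `hAlt` produces for a given input length. -/
def gWord (n : ℕ) : List AB :=
  wpow [AB.a, AB.b] (n / 2) ++ (if n % 2 = 1 then [AB.a] else [])

theorem hAlt_eq_gWord (w : List Unit) : hAlt w = gWord w.length := rfl

/-- `hAlt` is J-continuous. -/
theorem hAlt_j_continuous (L : Set (List AB)) (hL : RecogByFinJTrivialMonoid L) :
    RecogByFinJTrivialMonoid (hAlt ⁻¹' L) := by
  obtain ⟨M, instF, instM, hJ, φ, S, hS⟩ := hL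
  set m : M := φ (FreeMonoid.ofList [AB.a, AB.b]) with hm
  set α : M := φ (FreeMonoid.ofList [AB.a]) with hα
  set β : M := φ (FreeMonoid.ofList [AB.b]) with hβ
  have hmαβ : m = α * β := by
    rw [hm, hα, hβ, ← map_mul]
    rfl
  -- powers of m stabilize
  obtain ⟨i, j, hij, hpow⟩ : ∃ i j : ℕ, i < j ∧ m ^ i = m ^ j := by
    obtain ⟨x, y, hxy, h⟩ := Finite.exists_ne_map_eq_of_infinite (fun n : ℕ => m ^ n)
    rcases lt_or_gt_of_ne hxy with h' | h'
    · exact ⟨x, y, h', h⟩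
    · exact ⟨y, x, h', h.symm⟩
  have hstep : m ^ (i + 1) = m ^ i := by
    apply hJ
    · exact ⟨m, 1, by rw [mul_one, ← pow_succ']⟩
    · refine ⟨m ^ (j - i - 1), 1, ?_⟩
      rw [mul_one, ← pow_add, hpow]
      congr 1
      omega
  have hconst : ∀ k, i ≤ k → m ^ k = m ^ i := by
    intro k hk
    induction k, hk using Nat.le_induction with
    | base => rfl
    | succ k hk ih =>
      calc m ^ (k + 1) = m ^ k * m := pow_succ m k
      _ = m ^ i * m := by rw [ih]
      _ = m ^ (i + 1) := (pow_succ m i).symm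
      _ = m ^ i := hstep
  have heα : m ^ i * α = m ^ i := by
    apply hJ
    · exact ⟨1, α, by rw [one_mul]⟩
    · exact ⟨1, β, by rw [one_mul, mul_assoc, ← hmαβ, ← pow_succ]; exact hstep.symm⟩
  have hwpow : ∀ k, φ (FreeMonoid.ofList (wpow [AB.a, AB.b] k)) = m ^ k := by
    intro k
    induction k with
    | zero =>
      show φ 1 = m ^ 0
      rw [map_one, pow_zero]
    | succ k ih =>
      show φ (FreeMonoid.ofList ([AB.a, AB.b] ++ wpow [AB.a, AB.b] k)) = m ^ (k + 1)
      rw [FreeMonoid.ofList_append, map_mul, ih, ← hm, pow_succ']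
  have hgval : ∀ n, φ (FreeMonoid.ofList (gWord n))
      = if n % 2 = 1 then m ^ (n / 2) * α else m ^ (n / 2) := by
    intro n
    unfold gWord
    by_cases h : n % 2 = 1
    · rw [if_pos h, if_pos h, FreeMonoid.ofList_append, map_mul, hwpow, ← hα]
    · rw [if_neg h, if_neg h, List.append_nil, hwpow]
  have hgconst : ∀ n, 2 * i ≤ n → φ (FreeMonoid.ofList (gWord n)) = m ^ i := by
    intro n hn
    have hdiv : i ≤ n / 2 := by omega
    rw [hgval]
    by_cases h : n % 2 = 1
    · rw [if_pos h, hconst _ hdiv, heα]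
    · rw [if_neg h, hconst _ hdiv]
  -- build the recognizer
  refine ⟨Cap (2 * i), inferInstance, inferInstance, capJTrivial (2 * i),
    capHom (2 * i), {x : Cap (2 * i) | φ (FreeMonoid.ofList (gWord x.val)) ∈ S}, ?_⟩
  ext w
  have hcap : capHom (2 * i) (FreeMonoid.ofList w)
      = (⟨min w.length (2 * i), min_le_right _ _⟩ : Cap (2 * i)) := rfl
  have hgmin : φ (FreeMonoid.ofList (gWord (min w.length (2 * i))))
      = φ (FreeMonoid.ofList (gWord w.length)) := by
    rcases le_or_gt w.length (2 * i) with h | h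
    · rw [min_eq_left h]
    · rw [min_eq_right h.le, hgconst _ (le_refl _), hgconst _ h.le]
  have hmem : hAlt w ∈ L ↔ φ (FreeMonoid.ofList (gWord w.length)) ∈ S := by
    rw [hS, hAlt_eq_gWord]
    exact Iff.rfl
  simp only [Set.mem_preimage, Set.mem_setOf_eq, hcap, hmem, hgmin]
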